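/- Let μ be a translation-invariant percolation on ℤ². Then μ-almost surely, for every infinite cluster C of G_η the following holds: if the set of second coordinates of the vertices of C is bounded below, with minimum b, then the set {x ∈ ℤ : (x,b) ∈ C} is infinite. -/

import Mathlib

/-!
Order `ℤ²` row by row (lowest row first, then left to right) and call `v` the root of its
cluster when `v` is the least vertex of that cluster in this order. An infinite cluster whose
lowest row is finite has a root, so it suffices to show that almost surely no infinite cluster
has one. Let every vertex send unit mass to the root of its cluster when that cluster is
infinite and rooted. By translation invariance (mass transport) the expected mass sent from the
origin equals the expected mass it receives. The former is at most one, since a cluster has at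
most one root; the latter is `∞ · μ (0 is the root of an infinite cluster)`.
-/

open MeasureTheory

/-- Vertices of the square lattice `ℤ²`. -/
abbrev Vertex : Type := ℤ × ℤ

/-- Edges of `ℤ²`, encoded as a base vertex together with a direction:
`false` is the horizontal edge from `v` to `v + (1,0)`, `true` the vertical
edge from `v` to `v + (0,1)`. -/
abbrev Edge : Type := Vertex × Bool

/-- Percolation configurations `η : E(ℤ²) → {0,1}`. -/
abbrev Config : Type := Edge → Bool

/-- The displacement vector of an edge with direction `d`. -/
def edgeDir (d : Bool) : Vertex := if d then (0, 1) else (1, 0)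

/-- `joins e u v` says that the edge `e` has endpoints `u` and `v`. -/
def joins (e : Edge) (u v : Vertex) : Prop :=
  (e.1 = u ∧ u + edgeDir e.2 = v) ∨ (e.1 = v ∧ v + edgeDir e.2 = u)

/-- The open subgraph `G_η` of `ℤ²`: two vertices are adjacent iff some open
edge joins them. -/
def openGraph (η : Config) : SimpleGraph Vertex where
  Adj u v := u ≠ v ∧ ∃ e : Edge, η e = true ∧ joins e u v
  symm := by
    constructor
    rintro u v ⟨hne, e, he, hj⟩
    exact ⟨hne.symm, e, he, hj.symm⟩
  loopless := by
    constructor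
    rintro u ⟨hne, -⟩
    exact hne rfl

/-- The half-plane restriction `HP_b(G_η)`: keep only open edges with both
endpoints having second coordinate `≥ b`. -/
def hpGraph (b : ℤ) (η : Config) : SimpleGraph Vertex where
  Adj u v := b ≤ u.2 ∧ b ≤ v.2 ∧ (openGraph η).Adj u v
  symm := by
    constructor
    rintro u v ⟨hu, hv, h⟩
    exact ⟨hv, hu, h.symm⟩
  loopless := by
    constructor
    rintro u ⟨-, -, h⟩
    exact (openGraph η).loopless.irrefl u h

/-- `C` is a cluster (connected component) of `G_η`. -/
def IsCluster (η : Config) (C : Set Vertex) : Prop :=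
  ∃ v : Vertex, C = {u | (openGraph η).Reachable v u}

/-- `C` is a cluster of the half-plane restriction `HP_b(G_η)`: the component
of some vertex lying in the half-plane `{y ≥ b}`. -/
def IsClusterHP (b : ℤ) (η : Config) (C : Set Vertex) : Prop :=
  ∃ v : Vertex, b ≤ v.2 ∧ C = {u | (hpGraph b η).Reachable v u}

/-- The dual configuration `η*`: a dual edge is open iff the primal edge it
crosses is closed.  The dual edge with base `(a,c)` and direction `false`
(going to `(a+1,c)`) crosses the primal vertical edge `{(a+1,c),(a+1,c+1)}`;
the dual edge with base `(a,c)` and direction `true` (going to `(a,c+1)`)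
crosses the primal horizontal edge `{(a,c+1),(a+1,c+1)}`. -/
def dualConfig (η : Config) : Config := fun e =>
  if e.2 then !η ((e.1.1, e.1.2 + 1), false) else !η ((e.1.1 + 1, e.1.2), true)

/-- Translation of configurations: `(T_t η)(e) = η (e - t)`. -/
def shift (t : Vertex) (η : Config) : Config := fun e => η (e.1 - t, e.2)

open scoped ENNReal

section Measurability

variable {Ω α : Type*} [MeasurableSpace Ω]

lemma measurableSet_setOf_isChain {r : Ω → α → α → Prop}
    (hr : ∀ a b, MeasurableSet {ω | r ω a b}) :
    ∀ l : List α, MeasurableSet {ω | l.IsChain (r ω)}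
  | [] => by simp
  | [_] => by simp
  | a :: b :: l => by
    simp only [List.isChain_cons_cons, Set.ofPred_and]
    exact (hr a b).inter (measurableSet_setOf_isChain hr (b :: l))

lemma measurableSet_setOf_reflTransGen [Countable α] {r : Ω → α → α → Prop}
    (hr : ∀ a b, MeasurableSet {ω | r ω a b}) (a b : α) :
    MeasurableSet {ω | Relation.ReflTransGen (r ω) a b} := by
  have h : {ω | Relation.ReflTransGen (r ω) a b} =
      ⋃ (l : List α) (_ : (a :: l).getLast (List.cons_ne_nil a l) = b),
        {ω | (a :: l).IsChain (r ω)} := by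
    ext ω
    simp only [Set.mem_ofPred_eq, Set.mem_iUnion, exists_prop]
    constructor
    · intro h
      obtain ⟨l, hc, hl⟩ := List.exists_isChain_cons_of_relationReflTransGen h
      exact ⟨l, hl, hc⟩
    · rintro ⟨l, hl, hc⟩
      exact List.relationReflTransGen_of_exists_isChain_cons l hc hl
  rw [h]
  exact .iUnion fun l => .iUnion fun _ => measurableSet_setOf_isChain hr _

lemma measurableSet_setOf_finite [Countable α] {s : Ω → Set α}
    (hs : ∀ a, MeasurableSet {ω | a ∈ s ω}) : MeasurableSet {ω | (s ω).Finite} := by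
  have h : {ω | (s ω).Finite} = ⋃ F : Finset α, ⋂ a : α, {ω | a ∈ s ω → a ∈ F} := by
    ext ω
    simp only [Set.mem_ofPred_eq, Set.mem_iUnion, Set.mem_iInter]
    exact ⟨fun h => ⟨h.toFinset, fun a => h.mem_toFinset.2⟩,
      fun ⟨F, hF⟩ => F.finite_toSet.subset hF⟩
  rw [h]
  exact .iUnion fun F => .iInter fun a => (hs a).imp (MeasurableSet.const _)

end Measurability

lemma measurableSet_setOf_openGraph_adj (u v : Vertex) :
    MeasurableSet {η : Config | (openGraph η).Adj u v} := by
  have h : {η : Config | (openGraph η).Adj u v} =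
      ⋃ e : Edge, {_η | u ≠ v ∧ joins e u v} ∩ (fun η : Config ↦ η e) ⁻¹' {true} := by
    ext η
    simp [openGraph, and_comm, and_left_comm]
  rw [h]
  exact .iUnion fun e =>
    (MeasurableSet.const _).inter (measurable_pi_apply e (measurableSet_singleton true))

lemma measurableSet_setOf_openGraph_reachable (u v : Vertex) :
    MeasurableSet {η : Config | (openGraph η).Reachable u v} := by
  simp only [SimpleGraph.reachable_iff_reflTransGen]
  exact measurableSet_setOf_reflTransGen measurableSet_setOf_openGraph_adj u v

lemma joins_add_iff (t w u v : Vertex) (d : Bool) :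
    joins (w + t, d) (u + t) (v + t) ↔ joins (w, d) u v := by
  simp [joins, add_right_comm _ t]

def openGraphShiftIso (t : Vertex) (η : Config) : openGraph η ≃g openGraph (shift t η) where
  toEquiv := Equiv.addRight t
  map_rel_iff' {u v} := by
    refine and_congr (by simp) ?_
    rw [← ((Equiv.addRight t).prodCongr (Equiv.refl Bool)).exists_congr_right]
    simp [shift, joins_add_iff]

def cluster (η : Config) (v : Vertex) : Set Vertex := {u | (openGraph η).Reachable v u}

lemma cluster_shift (t : Vertex) (η : Config) (v : Vertex) :
    cluster (shift t η) (v + t) = (· + t) '' cluster η v := by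
  ext u
  obtain ⟨w, rfl⟩ : ∃ w, u = w + t := ⟨u - t, (sub_add_cancel u t).symm⟩
  rw [(add_left_injective t).mem_set_image]
  exact (openGraphShiftIso t η).reachable_iff

lemma cluster_eq_of_mem {η : Config} {u v : Vertex} (h : u ∈ cluster η v) :
    cluster η u = cluster η v := by
  ext w
  exact ⟨h.trans, (SimpleGraph.Reachable.symm h).trans⟩

lemma measurableSet_setOf_mem_cluster (u v : Vertex) :
    MeasurableSet {η : Config | u ∈ cluster η v} :=
  measurableSet_setOf_openGraph_reachable v u

def rowMajor : Vertex ≃ ℤ ×ₗ ℤ := (Equiv.prodComm ℤ ℤ).trans toLex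

lemma rowMajor_le_iff {u v : Vertex} :
    rowMajor u ≤ rowMajor v ↔ u.2 < v.2 ∨ u.2 = v.2 ∧ u.1 ≤ v.1 :=
  Prod.Lex.toLex_le_toLex

lemma rowMajor_add_le_add_iff (t : Vertex) {u v : Vertex} :
    rowMajor (u + t) ≤ rowMajor (v + t) ↔ rowMajor u ≤ rowMajor v := by
  simp only [rowMajor_le_iff, Prod.snd_add, Prod.fst_add]
  omega

def rootEvent (v : Vertex) : Set Config :=
  {η | (cluster η v).Infinite ∧ ∀ u ∈ cluster η v, rowMajor v ≤ rowMajor u}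

def rootOfEvent (u v : Vertex) : Set Config := rootEvent v ∩ {η | u ∈ cluster η v}

lemma shift_preimage_rootEvent (t v : Vertex) : shift t ⁻¹' rootEvent (v + t) = rootEvent v := by
  ext η
  simp only [rootEvent, Set.mem_preimage, Set.mem_ofPred_eq, cluster_shift,
    Set.infinite_image_iff (add_left_injective t).injOn, Set.forall_mem_image,
    rowMajor_add_le_add_iff]

lemma shift_preimage_rootOfEvent (t u v : Vertex) :
    shift t ⁻¹' rootOfEvent (u + t) (v + t) = rootOfEvent u v := by
  ext η
  simp only [rootOfEvent, Set.preimage_inter, shift_preimage_rootEvent, Set.mem_inter_iff,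
    Set.mem_preimage, Set.mem_ofPred_eq, cluster_shift, (add_left_injective t).mem_set_image]

lemma measurableSet_rootEvent (v : Vertex) : MeasurableSet (rootEvent v) := by
  have h : rootEvent v = {η | (cluster η v).Finite}ᶜ ∩
      ⋂ u, {η | u ∈ cluster η v → rowMajor v ≤ rowMajor u} := by
    ext η
    simp [rootEvent]
  rw [h]
  exact (measurableSet_setOf_finite fun u => measurableSet_setOf_mem_cluster u v).compl.inter <|
    .iInter fun u => (measurableSet_setOf_mem_cluster u v).imp (MeasurableSet.const _)

lemma measurableSet_rootOfEvent (u v : Vertex) : MeasurableSet (rootOfEvent u v) :=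
  (measurableSet_rootEvent v).inter (measurableSet_setOf_mem_cluster u v)

lemma pairwise_disjoint_rootOfEvent (u : Vertex) :
    Pairwise (Function.onFun Disjoint (rootOfEvent u)) := by
  intro v w hvw
  refine Set.disjoint_left.2 fun η ⟨⟨_, hv⟩, huv⟩ ⟨⟨_, hw⟩, huw⟩ ↦ hvw (rowMajor.injective ?_)
  have hcl : cluster η v = cluster η w :=
    (cluster_eq_of_mem huv).symm.trans (cluster_eq_of_mem huw)
  exact le_antisymm (hv w (hcl ▸ SimpleGraph.Reachable.refl w))
    (hw v (hcl ▸ SimpleGraph.Reachable.refl v))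

section MassTransport

variable (μ : Measure Config)

lemma tsum_measure_transport (hinv : ∀ t : Vertex, MeasurePreserving (shift t) μ μ)
    {A : Vertex → Vertex → Set Config}
    (hA : ∀ t u v, shift t ⁻¹' A (u + t) (v + t) = A u v)
    (hmeas : ∀ u v, MeasurableSet (A u v)) :
    ∑' u, μ (A u 0) = ∑' v, μ (A 0 v) := by
  have h (u : Vertex) : μ (A u 0) = μ (A 0 (-u)) := by
    rw [← hA u 0 (-u), zero_add, neg_add_cancel,
      (hinv u).measure_preimage (hmeas u 0).nullMeasurableSet]
  rw [tsum_congr h]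
  exact (Equiv.neg Vertex).tsum_eq fun v => μ (A 0 v)

lemma tsum_measure_rootOfEvent_le_one [IsProbabilityMeasure μ] (u : Vertex) :
    ∑' v, μ (rootOfEvent u v) ≤ 1 := by
  rw [← measure_iUnion (pairwise_disjoint_rootOfEvent u) (measurableSet_rootOfEvent u)]
  exact prob_le_one

lemma tsum_indicator_rootOfEvent_eq_top {η : Config} {v : Vertex} (hη : η ∈ rootEvent v) :
    ∑' u, (rootOfEvent u v).indicator (1 : Config → ℝ≥0∞) η = ∞ := by
  have : Infinite (cluster η v) := hη.1.to_subtype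
  have h (u : Vertex) :
      (rootOfEvent u v).indicator (1 : Config → ℝ≥0∞) η =
        (cluster η v).indicator 1 u := by
    by_cases hu : u ∈ cluster η v
    · have hηu : η ∈ rootOfEvent u v := ⟨hη, hu⟩
      rw [Set.indicator_of_mem hu, Set.indicator_of_mem hηu, Pi.one_apply, Pi.one_apply]
    · have hηu : η ∉ rootOfEvent u v := (hu ·.2)
      rw [Set.indicator_of_notMem hu, Set.indicator_of_notMem hηu]
  rw [tsum_congr h, ← tsum_subtype]
  exact ENNReal.tsum_const_eq_top_of_ne_zero one_ne_zero

lemma top_mul_measure_rootEvent_le (v : Vertex) :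
    ∞ * μ (rootEvent v) ≤ ∑' u, μ (rootOfEvent u v) := by
  calc ∞ * μ (rootEvent v) = ∫⁻ η, (rootEvent v).indicator (fun _ => ∞) η ∂μ :=
        (lintegral_indicator_const (measurableSet_rootEvent v) ∞).symm
    _ ≤ ∫⁻ η, ∑' u, (rootOfEvent u v).indicator (1 : Config → ℝ≥0∞) η ∂μ := by
        refine lintegral_mono fun η => ?_
        by_cases hη : η ∈ rootEvent v
        · rw [Set.indicator_of_mem hη, tsum_indicator_rootOfEvent_eq_top hη]
        · simp [Set.indicator_of_notMem hη]
    _ = ∑' u, μ (rootOfEvent u v) := by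
        rw [lintegral_tsum fun u =>
          (measurable_one.indicator (measurableSet_rootOfEvent u v)).aemeasurable]
        simp_rw [lintegral_indicator_one (measurableSet_rootOfEvent _ v)]

lemma measure_rootEvent_eq_zero [IsProbabilityMeasure μ]
    (hinv : ∀ t : Vertex, MeasurePreserving (shift t) μ μ) (v : Vertex) :
    μ (rootEvent v) = 0 := by
  have h0 : μ (rootEvent 0) = 0 := by
    by_contra hne
    have htop : ∞ * μ (rootEvent 0) ≤ 1 := calc
      _ ≤ ∑' u, μ (rootOfEvent u 0) := top_mul_measure_rootEvent_le μ 0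
      _ = ∑' v, μ (rootOfEvent 0 v) :=
        tsum_measure_transport μ hinv shift_preimage_rootOfEvent measurableSet_rootOfEvent
      _ ≤ 1 := tsum_measure_rootOfEvent_le_one μ 0
    simp [ENNReal.top_mul hne] at htop
  rw [← zero_add v, ← (hinv v).measure_preimage (measurableSet_rootEvent _).nullMeasurableSet,
    shift_preimage_rootEvent, h0]

end MassTransport

lemma exists_mem_rootEvent {η : Config} {C : Set Vertex} (hC : IsCluster η C)
    (hinf : C.Infinite) {b : ℤ} (hb : IsLeast {y : ℤ | ∃ x : ℤ, (x, y) ∈ C} b)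
    (hfin : {x : ℤ | (x, b) ∈ C}.Finite) :
    ∃ v, η ∈ rootEvent v := by
  obtain ⟨x₀, hx₀⟩ := hb.1
  obtain ⟨m, hm, hmin⟩ := Set.exists_min_image _ id hfin ⟨x₀, hx₀⟩
  obtain ⟨w, rfl⟩ := hC
  have hcl : cluster η (m, b) = cluster η w := cluster_eq_of_mem hm
  refine ⟨(m, b), hcl ▸ hinf, fun u hu => rowMajor_le_iff.2 ?_⟩
  rw [hcl] at hu
  rcases (hb.2 ⟨u.1, hu⟩).lt_or_eq with hlt | heq
  · exact .inl hlt
  · exact .inr ⟨heq, hmin u.1 (heq ▸ hu)⟩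

/-- For a translation-invariant percolation on `ℤ²`, almost
surely, every infinite cluster of `G_η` whose set of second coordinates has a
minimum `b` meets the line `y = b` in infinitely many vertices. -/
theorem lowermost_line_intersection_infinite
    (μ : Measure Config) [IsProbabilityMeasure μ]
    (hinv : ∀ t : Vertex, MeasurePreserving (shift t) μ μ) :
    ∀ᵐ η ∂μ, ∀ C : Set Vertex, IsCluster η C → C.Infinite →
      ∀ b : ℤ, IsLeast {y : ℤ | ∃ x : ℤ, (x, y) ∈ C} b →
        {x : ℤ | (x, b) ∈ C}.Infinite := by
  have hnull : μ (⋃ v, rootEvent v) = 0 :=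
    measure_iUnion_null (measure_rootEvent_eq_zero μ hinv)
  filter_upwards [measure_eq_zero_iff_ae_notMem.1 hnull] with η hη C hC hinf b hb hfin
  exact hη (Set.mem_iUnion.2 (exists_mem_rootEvent hC hinf hb hfin))
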